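/- arXiv:2203.11109 — 9 statements merged into one kernel-verified Lean document; each statement's English description precedes it below -/
import Mathlib

section
/- Let A = ⊕_{i≥0} A_i be a graded Perm (GPerm) algebra: a unital ℕ-graded associative algebra satisfying a(bc) = a(cb) whenever a has positive degree. If A is semiprime (its prime radical is zero), then every homogeneous element of positive degree is central in A. -/
/-!
If `a` has positive degree, the Perm identity says that left multiplication by `a` kills every
commutator. Feeding this back into itself shows that `t = a * b - b * a` satisfies
`t * z * t = 0` for every `z`, so the two-sided ideal generated by `t` squares to zero and
semiprimeness forces `t = 0`.
-/

namespace TwoSidedIdeal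

variable {R : Type*} [Ring R] {s : Set R}

theorem mul_mul_eq_zero_of_mem_span_left {y : R} (h : ∀ u ∈ s, ∀ z, u * z * y = 0) {x : R}
    (hx : x ∈ span s) (z : R) : x * z * y = 0 := by
  induction hx using span_induction generalizing z with
  | mem u hu => exact h u hu z
  | zero => simp
  | add x x' _ _ ihx ihx' => rw [add_mul, add_mul, ihx, ihx', add_zero]
  | neg x _ ihx => rw [neg_mul, neg_mul, ihx, neg_zero]
  | left_absorb c x _ ihx => rw [mul_assoc c, mul_assoc c, ihx, mul_zero]
  | right_absorb c x _ ihx => rw [mul_assoc x c, ihx]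

theorem mul_mul_eq_zero_of_mem_span_right {x : R} (h : ∀ v ∈ s, ∀ z, x * z * v = 0) {y : R}
    (hy : y ∈ span s) (z : R) : x * z * y = 0 := by
  induction hy using span_induction generalizing z with
  | mem v hv => exact h v hv z
  | zero => simp
  | add y y' _ _ ihy ihy' => rw [mul_add, ihy, ihy', add_zero]
  | neg y _ ihy => rw [mul_neg, ihy, neg_zero]
  | left_absorb c y _ ihy => rw [← mul_assoc, mul_assoc x, ihy]
  | right_absorb c y _ ihy => rw [← mul_assoc, ihy, zero_mul]

theorem mul_eq_zero_of_mem_span (h : ∀ u ∈ s, ∀ v ∈ s, ∀ z, u * z * v = 0) {x y : R}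
    (hx : x ∈ span s) (hy : y ∈ span s) : x * y = 0 := by
  have hxy := mul_mul_eq_zero_of_mem_span_left
    (fun u hu => mul_mul_eq_zero_of_mem_span_right (h u hu) hy) hx 1
  rwa [mul_one] at hxy

end TwoSidedIdeal

theorem eq_zero_of_mul_mul_self_eq_zero {R : Type*} [Ring R]
    (hR : ∀ I : TwoSidedIdeal R, (∀ x ∈ I, ∀ y ∈ I, x * y = 0) → ∀ x ∈ I, x = 0) {t : R}
    (ht : ∀ z, t * z * t = 0) : t = 0 :=
  hR (.span {t})
    (fun _ hx _ hy => TwoSidedIdeal.mul_eq_zero_of_mem_span (by simpa using ht) hx hy)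
    t (TwoSidedIdeal.subset_span rfl)

section PermElement

variable {R : Type*} [Ring R] {a : R}

theorem mul_commutator_eq_zero (ha : ∀ b c : R, a * (b * c) = a * (c * b)) (x y : R) :
    a * (x * y - y * x) = 0 := by
  rw [mul_sub, ha, sub_self]

theorem mul_mul_commutator_eq_zero (ha : ∀ b c : R, a * (b * c) = a * (c * b)) (b z : R) :
    a * (z * (a * b - b * a)) = 0 :=
  calc a * (z * (a * b - b * a)) = a * ((a * b - b * a) * z) := ha z _
    _ = a * (a * (b * z)) - a * (b * (a * z)) := by simp only [sub_mul, mul_sub, mul_assoc]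
    _ = a * (a * (b * z)) - a * (a * (z * b)) := by rw [ha b (a * z), mul_assoc a z b]
    _ = a * (a * (b * z - z * b)) := by rw [mul_sub, mul_sub]
    _ = 0 := by rw [mul_commutator_eq_zero ha, mul_zero]

theorem commutator_mul_mul_commutator_eq_zero (ha : ∀ b c : R, a * (b * c) = a * (c * b))
    (b z : R) : (a * b - b * a) * z * (a * b - b * a) = 0 := by
  rw [mul_assoc, sub_mul, mul_assoc, mul_assoc, mul_mul_commutator_eq_zero ha, ← mul_assoc b z,
    mul_mul_commutator_eq_zero ha, mul_zero, sub_zero]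

end PermElement

theorem stmt6_general {k A : Type*} [Field k] [Ring A] [Algebra k A]
    (𝒜 : ℕ → Submodule k A)
    (hperm : ∀ i, 1 ≤ i → ∀ a ∈ 𝒜 i, ∀ b c : A, a * (b * c) = a * (c * b))
    (hsemiprime : ∀ I : TwoSidedIdeal A,
      (∀ x ∈ I, ∀ y ∈ I, x * y = 0) → ∀ x ∈ I, x = 0) :
    ∀ i, 1 ≤ i → ∀ a ∈ 𝒜 i, ∀ b : A, a * b = b * a := by
  intro i hi a ha b
  exact sub_eq_zero.mp <| eq_zero_of_mul_mul_self_eq_zero hsemiprime <|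
    commutator_mul_mul_commutator_eq_zero (hperm i hi a ha) b

/-- A semiprime graded Perm (GPerm) algebra: every homogeneous element of
positive degree is central. -/
theorem stmt6 {k A : Type*} [Field k] [Ring A] [Algebra k A]
    (𝒜 : ℕ → Submodule k A) [GradedAlgebra 𝒜]
    (hperm : ∀ i, 1 ≤ i → ∀ a ∈ 𝒜 i, ∀ b c : A, a * (b * c) = a * (c * b))
    (hsemiprime : ∀ I : TwoSidedIdeal A,
      (∀ x ∈ I, ∀ y ∈ I, x * y = 0) → ∀ x ∈ I, x = 0) :
    ∀ i, 1 ≤ i → ∀ a ∈ 𝒜 i, ∀ b : A, a * b = b * a :=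
  stmt6_general 𝒜 hperm hsemiprime
end

section
/- Let A be a GPerm algebra that is prime (the product of any two nonzero two-sided ideals is nonzero) and infinite dimensional. Then A is commutative. -/
/-- A prime, infinite-dimensional (locally finite) GPerm algebra is commutative. -/
theorem stmt7 {k A : Type*} [Field k] [Ring A] [Algebra k A]
    (𝒜 : ℕ → Submodule k A) [GradedAlgebra 𝒜]
    (hlf : ∀ i, FiniteDimensional k (𝒜 i))
    (hperm : ∀ i, 1 ≤ i → ∀ a ∈ 𝒜 i, ∀ b c : A, a * (b * c) = a * (c * b))
    (hprime : ∀ I J : TwoSidedIdeal A,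
      (∀ x ∈ I, ∀ y ∈ J, x * y = 0) → (∀ x ∈ I, x = 0) ∨ (∀ y ∈ J, y = 0))
    (hinf : ¬ FiniteDimensional k A) :
    ∀ a b : A, a * b = b * a := by
  -- J = right annihilator of all homogeneous elements of positive degree
  set Jc : Set A := {y | ∀ i, 1 ≤ i → ∀ a ∈ 𝒜 i, a * y = 0} with hJc
  have Jzero : (0 : A) ∈ Jc := fun i hi a _ => mul_zero a
  have Jadd : ∀ {x y : A}, x ∈ Jc → y ∈ Jc → x + y ∈ Jc := by
    intro x y hx hy i hi a ha
    rw [mul_add, hx i hi a ha, hy i hi a ha, add_zero]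
  have Jneg : ∀ {x : A}, x ∈ Jc → -x ∈ Jc := by
    intro x hx i hi a ha
    rw [mul_neg, hx i hi a ha, neg_zero]
  have Jml : ∀ {x y : A}, y ∈ Jc → x * y ∈ Jc := by
    intro x y hy i hi a ha
    rw [hperm i hi a ha x y, ← mul_assoc, hy i hi a ha, zero_mul]
  have Jmr : ∀ {x y : A}, x ∈ Jc → x * y ∈ Jc := by
    intro x y hx i hi a ha
    rw [← mul_assoc, hx i hi a ha, zero_mul]
  let J : TwoSidedIdeal A := TwoSidedIdeal.mk' Jc Jzero Jadd Jneg Jml Jmr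
  have memJ : ∀ y : A, y ∈ J ↔ y ∈ Jc := TwoSidedIdeal.mem_mk' _ _ _ _ _ _
  -- I = left annihilator of J
  set Ic : Set A := {x | ∀ y ∈ Jc, x * y = 0} with hIc
  have Izero : (0 : A) ∈ Ic := fun y _ => zero_mul y
  have Iadd : ∀ {x y : A}, x ∈ Ic → y ∈ Ic → x + y ∈ Ic := by
    intro x y hx hy z hz
    rw [add_mul, hx z hz, hy z hz, add_zero]
  have Ineg : ∀ {x : A}, x ∈ Ic → -x ∈ Ic := by
    intro x hx z hz
    rw [neg_mul, hx z hz, neg_zero]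
  have Iml : ∀ {x y : A}, y ∈ Ic → x * y ∈ Ic := by
    intro x y hy z hz
    rw [mul_assoc, hy z hz, mul_zero]
  have Imr : ∀ {x y : A}, x ∈ Ic → x * y ∈ Ic := by
    intro x y hx z hz
    rw [mul_assoc, hx (y * z) (Jml hz)]
  let I : TwoSidedIdeal A := TwoSidedIdeal.mk' Ic Izero Iadd Ineg Iml Imr
  have memI : ∀ x : A, x ∈ I ↔ x ∈ Ic := TwoSidedIdeal.mem_mk' _ _ _ _ _ _
  have key : (∀ x ∈ I, x = 0) ∨ (∀ y ∈ J, y = 0) := by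
    apply hprime I J
    intro x hx y hy
    exact ((memI x).1 hx) y ((memJ y).1 hy)
  rcases key with hI | hJ
  · -- all positive degree parts vanish → A = 𝒜 0, finite dimensional, contradiction
    exfalso
    have hpos : ∀ i, 1 ≤ i → 𝒜 i = ⊥ := by
      intro i hi
      rw [eq_bot_iff]
      intro a ha
      have : a ∈ I := (memI a).2 (fun y hy => hy i hi a ha)
      simpa using hI a this
    have htop : (⊤ : Submodule k A) ≤ 𝒜 0 := by
      have hsup : (⨆ i, 𝒜 i) = ⊤ :=
        (DirectSum.Decomposition.isInternal 𝒜).submodule_iSup_eq_top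
      rw [← hsup]
      apply iSup_le
      intro i
      rcases Nat.eq_zero_or_pos i with h0 | h1
      · rw [h0]
      · rw [hpos i h1]; exact bot_le
    have heq : (𝒜 0) = ⊤ := le_antisymm le_top htop
    have : FiniteDimensional k A := by
      have := hlf 0
      rw [heq] at this
      exact (Submodule.topEquiv (R := k) (M := A)).finiteDimensional
    exact hinf this
  · -- all commutators lie in J
    intro a b
    have hcomm : a * b - b * a ∈ Jc := by
      intro i hi x hx
      rw [mul_sub, hperm i hi x hx a b, sub_self]
    exact sub_eq_zero.mp (hJ _ ((memJ _).2 hcomm))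
end

section
/- Let A be a GPerm algebra in which the left annihilator of A_{≥1} is zero (i.e., A_{≥1}·x = 0 implies x = 0). Then A is commutative. -/
/-- A GPerm algebra in which the left annihilator of `A_{≥1}` is zero
is commutative. -/
theorem stmt8 {k A : Type*} [Field k] [Ring A] [Algebra k A]
    (𝒜 : ℕ → Submodule k A) [GradedAlgebra 𝒜]
    (hperm : ∀ i, 1 ≤ i → ∀ a ∈ 𝒜 i, ∀ b c : A, a * (b * c) = a * (c * b))
    (hann : ∀ x : A, (∀ i, 1 ≤ i → ∀ a ∈ 𝒜 i, a * x = 0) → x = 0) :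
    ∀ a b : A, a * b = b * a := by
  intro a b
  have h : a * b - b * a = 0 := by
    apply hann
    intro i hi x hx
    rw [mul_sub, hperm i hi x hx a b, sub_self]
  exact sub_eq_zero.mp h
end

section
/- Let A be a GPerm algebra and let I be the two-sided ideal of A generated by all commutators [x,y] = xy − yx. Then A_{≥1}·I = 0, and consequently (I ∩ A_{≥1})² = 0. -/
/-- In a GPerm algebra, the two-sided ideal `I` generated by all commutators
satisfies `A_{≥1}·I = 0`, and consequently `(I ∩ A_{≥1})² = 0`. -/
theorem stmt9 {k A : Type*} [Field k] [Ring A] [Algebra k A]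
    (𝒜 : ℕ → Submodule k A) [GradedAlgebra 𝒜]
    (hperm : ∀ i, 1 ≤ i → ∀ a ∈ 𝒜 i, ∀ b c : A, a * (b * c) = a * (c * b)) :
    (∀ i, 1 ≤ i → ∀ a ∈ 𝒜 i,
      ∀ w ∈ TwoSidedIdeal.span {z : A | ∃ x y : A, z = x * y - y * x}, a * w = 0) ∧
    (∀ x y : A,
      x ∈ TwoSidedIdeal.span {z : A | ∃ u v : A, z = u * v - v * u} →
      x ∈ (⨆ i ≥ 1, 𝒜 i : Submodule k A) →
      y ∈ TwoSidedIdeal.span {z : A | ∃ u v : A, z = u * v - v * u} →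
      y ∈ (⨆ i ≥ 1, 𝒜 i : Submodule k A) →
      x * y = 0) := by
  have part1 : ∀ i, 1 ≤ i → ∀ a ∈ 𝒜 i,
      ∀ w ∈ TwoSidedIdeal.span {z : A | ∃ x y : A, z = x * y - y * x}, a * w = 0 := by
    intro i hi a ha w hw
    -- the set of w with a * w = 0 is a two-sided ideal
    let J : TwoSidedIdeal A := TwoSidedIdeal.mk' {w : A | a * w = 0}
      (by simp)
      (fun {x y} hx hy => by simp only [Set.mem_setOf_eq] at *; rw [mul_add, hx, hy, add_zero])
      (fun {x} hx => by simp only [Set.mem_setOf_eq] at *; rw [mul_neg, hx, neg_zero])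
      (fun {x y} hy => by
        simp only [Set.mem_setOf_eq] at *
        rw [hperm i hi a ha x y, ← mul_assoc, hy, zero_mul])
      (fun {x y} hx => by
        simp only [Set.mem_setOf_eq] at *
        rw [← mul_assoc, hx, zero_mul])
    have hsub : {z : A | ∃ x y : A, z = x * y - y * x} ⊆ (J : Set A) := by
      rintro z ⟨x, y, rfl⟩
      rw [SetLike.mem_coe, TwoSidedIdeal.mem_mk']
      show a * (x * y - y * x) = 0
      rw [mul_sub, hperm i hi a ha x y, sub_self]
    have := TwoSidedIdeal.mem_span_iff.mp hw J hsub
    simpa [J, TwoSidedIdeal.mem_mk'] using this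
  refine ⟨part1, ?_⟩
  intro x y hxI hx hyI hy
  -- the set of x with x * y = 0 is a submodule containing each 𝒜 i, i ≥ 1
  let S : Submodule k A :=
    { carrier := {x : A | x * y = 0}
      add_mem' := fun {u v} hu hv => by
        simp only [Set.mem_setOf_eq] at *; rw [add_mul, hu, hv, add_zero]
      zero_mem' := by simp
      smul_mem' := fun c u hu => by
        simp only [Set.mem_setOf_eq] at *
        rw [Algebra.smul_mul_assoc, hu, smul_zero] }
  have hle : (⨆ i ≥ 1, 𝒜 i : Submodule k A) ≤ S := by
    refine iSup_le fun i => iSup_le fun hi => fun a ha => ?_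
    exact part1 i hi a ha y hyI
  exact hle hx
end

section
/- Let X = {x_1, …, x_n} with assigned positive integer degrees, and let GPerm⟨X⟩ = k⟨X⟩/(R) where R consists of all elements x_i x_j x_k − x_i x_k x_j. Then as a graded vector space, GPerm⟨X⟩ ≅ k ⊕ ⊕_{i=1}^n x_i · k[x_1,…,x_n], and its Hilbert series equals 1 + (Σ_{i=1}^n t^{deg x_i}) / (Π_{i=1}^n (1 − t^{deg x_i})). -/
/-!
Modulo the relations, the letters after the first one of a word commute, so the image of a word
depends only on its first letter and the multiset of its other letters. These data, together with
the empty word, form a monoid `GPerm.Monomial`, and `x_i ↦ x_i` defines an algebra map from `k⟨X⟩`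
to its monoid algebra which kills the relations. Hence the images of one word per monomial are
linearly independent in `GPerm⟨X⟩`; they also span it, and they form a homogeneous basis whose
elements of degree `m ≥ 1` are indexed by the pairs `(i, f)` with `d i + ∑ j, f j * d j = m`.
-/

theorem LinearIndependent.comp_of_ker_le {ι R M N P : Type*} [Ring R] [AddCommGroup M]
    [AddCommGroup N] [AddCommGroup P] [Module R M] [Module R N] [Module R P] {v : ι → M}
    {g : M →ₗ[R] P} (hv : LinearIndependent R (g ∘ v)) (f : M →ₗ[R] N)
    (hfg : LinearMap.ker f ≤ LinearMap.ker g) : LinearIndependent R (f ∘ v) := by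
  rw [linearIndependent_iff] at hv ⊢
  intro c hc
  rw [← Finsupp.apply_linearCombination] at hc
  exact hv c (by rw [← Finsupp.apply_linearCombination]; exact hfg hc)

section Grading

variable {ι κ R M : Type*} [Semiring R] [AddCommMonoid M] [Module R M]

theorem iSup_span_image_preimage_singleton (b : ι → M) (deg : ι → κ) :
    ⨆ m, Submodule.span R (b '' (deg ⁻¹' {m})) = Submodule.span R (Set.range b) := by
  rw [← Submodule.span_iUnion, ← Set.image_iUnion, ← Set.preimage_iUnion,
    Set.iUnion_of_singleton, Set.preimage_univ, Set.image_univ]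

theorem LinearIndependent.iSupIndep_span_image_preimage_singleton {b : ι → M}
    (hb : LinearIndependent R b) (deg : ι → κ) :
    iSupIndep fun m => Submodule.span R (b '' (deg ⁻¹' {m})) := by
  refine fun m => (hb.disjoint_span_image (t := {x | deg x ≠ m}) ?_).mono_right ?_
  · exact Set.disjoint_left.2 fun x hx hx' => hx' hx
  · exact iSup₂_le fun j hj => Submodule.span_mono <| Set.image_mono fun x (hx : deg x = j) =>
      show deg x ≠ m by rwa [hx]

theorem LinearIndependent.finrank_span_image {R M : Type*} [Ring R] [StrongRankCondition R]
    [AddCommGroup M] [Module R M] {b : ι → M} (hb : LinearIndependent R b) (s : Set ι) :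
    Module.finrank R (Submodule.span R (b '' s)) = Nat.card s := by
  have := nontrivial_of_invariantBasisNumber R
  have hbs : LinearIndependent R fun x : s => b x := hb.comp _ Subtype.val_injective
  rw [Set.image_eq_range, Module.finrank, rank_span hbs]
  exact Nat.card_range_of_injective hbs.injective

end Grading

noncomputable section

namespace GPerm

variable {α : Type*}

/-- The nonempty monomial `x_head · ∏ j, x_j ^ tail j` of `GPerm⟨X⟩`. -/
structure Word (α : Type*) where
  head : α
  tail : α →₀ ℕ

namespace Word

instance : Mul (Word α) := ⟨fun a b => ⟨a.head, a.tail + Finsupp.single b.head 1 + b.tail⟩⟩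

theorem mul_def (a b : Word α) : a * b = ⟨a.head, a.tail + Finsupp.single b.head 1 + b.tail⟩ := rfl

instance : Semigroup (Word α) where
  mul_assoc a b c := by
    simp only [mul_def, mk.injEq, true_and]
    abel

def degree (d : α → ℕ) (w : Word α) : ℕ := d w.head + w.tail.sum fun j e => e * d j

theorem degree_mul (d : α → ℕ) (a b : Word α) : (a * b).degree d = a.degree d + b.degree d := by
  simp only [degree, mul_def]
  rw [Finsupp.sum_add_index' (by simp) (fun _ _ _ => add_mul _ _ _),
    Finsupp.sum_add_index' (by simp) (fun _ _ _ => add_mul _ _ _),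
    Finsupp.sum_single_index (zero_mul _)]
  ring

end Word

abbrev Monomial (α : Type*) := WithOne (Word α)

namespace Monomial

def letter (i : α) : Monomial α := (⟨i, 0⟩ : Word α)

def ofList (l : List α) : Monomial α := (l.map letter).prod

theorem ofList_cons (i : α) (t : List α) : ofList (i :: t) = letter i * ofList t := by
  simp [ofList]

theorem ofList_cons_eq_coe [DecidableEq α] (i : α) (t : List α) :
    ofList (i :: t) = (⟨i, Multiset.toFinsupp t⟩ : Word α) := by
  induction t generalizing i with
  | nil => rfl
  | cons j t ih =>
    rw [ofList_cons, ih, letter, ← WithOne.coe_mul, WithOne.coe_inj, Word.mul_def]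
    rw [← Multiset.cons_coe, ← Multiset.singleton_add, Multiset.toFinsupp_add,
      Multiset.toFinsupp_singleton, zero_add]

theorem ofList_surjective : Function.Surjective (ofList : List α → Monomial α) := by
  classical
  intro g
  induction g using WithOne.recOneCoe with
  | one => exact ⟨[], rfl⟩
  | coe w =>
    refine ⟨w.head :: (Finsupp.toMultiset w.tail).toList, ?_⟩
    rw [ofList_cons_eq_coe, Multiset.coe_toList, Finsupp.toMultiset_toFinsupp]

theorem ofList_cons_ne_one (i : α) (t : List α) : ofList (i :: t) ≠ 1 := by
  classical
  rw [ofList_cons_eq_coe]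
  exact WithOne.coe_ne_one

theorem perm_of_ofList_cons_eq {i j : α} {t s : List α} (h : ofList (i :: t) = ofList (j :: s)) :
    i = j ∧ t.Perm s := by
  classical
  rw [ofList_cons_eq_coe, ofList_cons_eq_coe, WithOne.coe_inj, Word.mk.injEq] at h
  exact ⟨h.1, Multiset.coe_eq_coe.mp (Multiset.toFinsupp.injective h.2)⟩

theorem letter_mul_mul_comm (i j l : α) :
    letter i * letter j * letter l = letter i * letter l * letter j := by
  simp only [letter, ← WithOne.coe_mul, WithOne.coe_inj, Word.mul_def, Word.mk.injEq, true_and]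
  abel

def degree (d : α → ℕ) (g : Monomial α) : ℕ := WithOne.recOneCoe 0 (Word.degree d) g

@[simp]
theorem degree_one (d : α → ℕ) : degree d 1 = 0 := rfl

@[simp]
theorem degree_coe (d : α → ℕ) (w : Word α) : degree d w = w.degree d := rfl

theorem degree_mul (d : α → ℕ) (g h : Monomial α) : degree d (g * h) = degree d g + degree d h := by
  induction g using WithOne.recOneCoe <;> induction h using WithOne.recOneCoe <;>
    simp [← WithOne.coe_mul, Word.degree_mul]

theorem degree_ofList (d : α → ℕ) (l : List α) : degree d (ofList l) = (l.map d).sum := by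
  induction l with
  | nil => rfl
  | cons i t ih => simp [ofList_cons, degree_mul, ih, letter, Word.degree]

end Monomial

open Monomial

section FreeAlgebra

variable (k : Type*) [CommRing k]

def word (l : List α) : FreeAlgebra k α := (l.map (FreeAlgebra.ι k)).prod

@[simp]
theorem word_append (l l' : List α) : word k (l ++ l') = word k l * word k l' := by
  simp [word]

theorem word_cons (i : α) (t : List α) : word k (i :: t) = FreeAlgebra.ι k i * word k t := by
  simp [word]

theorem span_range_word : Submodule.span k (Set.range (word k : List α → FreeAlgebra k α)) = ⊤ := by
  rw [eq_top_iff, ← Algebra.top_toSubmodule, ← FreeAlgebra.adjoin_range_ι, Algebra.adjoin_eq_span]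
  refine Submodule.span_mono fun z hz => ?_
  induction hz using Submonoid.closure_induction with
  | mem _ hz =>
    obtain ⟨i, rfl⟩ := hz
    exact ⟨[i], by simp [word]⟩
  | one => exact ⟨[], rfl⟩
  | mul _ _ _ _ hx hy =>
    obtain ⟨⟨l, rfl⟩, ⟨l', rfl⟩⟩ := And.intro hx hy
    exact ⟨l ++ l', word_append k l l'⟩

def relations (k α : Type*) [CommRing k] : Set (FreeAlgebra k α) :=
  {w | ∃ i j l : α, w = FreeAlgebra.ι k i * FreeAlgebra.ι k j * FreeAlgebra.ι k l
    - FreeAlgebra.ι k i * FreeAlgebra.ι k l * FreeAlgebra.ι k j}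

def toMonoidAlgebra : FreeAlgebra k α →ₐ[k] MonoidAlgebra k (Monomial α) :=
  FreeAlgebra.lift k fun i => MonoidAlgebra.of k _ (letter i)

@[simp]
theorem toMonoidAlgebra_ι (i : α) :
    toMonoidAlgebra k (FreeAlgebra.ι k i) = MonoidAlgebra.of k _ (letter i) :=
  FreeAlgebra.lift_ι_apply _ _

theorem toMonoidAlgebra_word (l : List α) :
    toMonoidAlgebra k (word k l) = MonoidAlgebra.of k _ (ofList l) := by
  simp [word, ofList, map_list_prod, Function.comp_def]

theorem span_relations_le_ker :
    TwoSidedIdeal.span (relations k α) ≤ TwoSidedIdeal.ker (toMonoidAlgebra k) := by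
  rw [TwoSidedIdeal.span_le]
  rintro _ ⟨i, j, l, rfl⟩
  rw [SetLike.mem_coe, TwoSidedIdeal.mem_ker, map_sub, sub_eq_zero]
  simp only [map_mul, toMonoidAlgebra_ι]
  rw [← map_mul, ← map_mul, ← map_mul, ← map_mul, letter_mul_mul_comm]

end FreeAlgebra

section Presentation

variable {k Q : Type*} [CommRing k] [Ring Q] [Algebra k Q] (f : FreeAlgebra k α →ₐ[k] Q)

theorem map_word (l : List α) : f (word k l) = (l.map fun i => f (FreeAlgebra.ι k i)).prod := by
  simp [word, map_list_prod, Function.comp_def]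

theorem map_word_cons_eq_of_perm (hf : ∀ r ∈ relations k α, f r = 0) {t t' : List α}
    (h : t.Perm t') (i : α) : f (word k (i :: t)) = f (word k (i :: t')) := by
  induction h generalizing i with
  | nil => rfl
  | cons a _ ih => rw [word_cons k i, word_cons k i, map_mul, map_mul, ih a]
  | swap a b t =>
    have hrel : word k (i :: b :: a :: t) - word k (i :: a :: b :: t) =
        (FreeAlgebra.ι k i * FreeAlgebra.ι k b * FreeAlgebra.ι k a
          - FreeAlgebra.ι k i * FreeAlgebra.ι k a * FreeAlgebra.ι k b) * word k t := by
      simp only [word_cons]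
      noncomm_ring
    rw [← sub_eq_zero, ← map_sub, hrel, map_mul, hf _ ⟨i, b, a, rfl⟩, zero_mul]
  | trans _ _ ih ih' => exact (ih i).trans (ih' i)

theorem map_word_eq_of_ofList_eq (hf : ∀ r ∈ relations k α, f r = 0) {l l' : List α}
    (h : ofList l = ofList l') : f (word k l) = f (word k l') := by
  match l, l', h with
  | [], [], _ => rfl
  | [], _ :: _, h => exact absurd h.symm (ofList_cons_ne_one _ _)
  | _ :: _, [], h => exact absurd h (ofList_cons_ne_one _ _)
  | i :: t, j :: s, h =>
    obtain ⟨rfl, hts⟩ := perm_of_ofList_cons_eq h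
    exact map_word_cons_eq_of_perm f hf hts i

def normalWord (g : Monomial α) : Q := f (word k (Function.surjInv ofList_surjective g))

theorem map_word_eq_normalWord (hf : ∀ r ∈ relations k α, f r = 0) (l : List α) :
    f (word k l) = normalWord f (ofList l) :=
  map_word_eq_of_ofList_eq f hf (Function.surjInv_eq ofList_surjective _).symm

theorem span_range_normalWord (hf : ∀ r ∈ relations k α, f r = 0) (hsurj : Function.Surjective f) :
    Submodule.span k (Set.range (normalWord f)) = ⊤ := by
  refine eq_top_iff.2 ?_
  calc ⊤ = (Submodule.span k (Set.range (word k))).map f.toLinearMap := by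
        rw [span_range_word, Submodule.map_top, LinearMap.range_eq_top.2 hsurj]
    _ = Submodule.span k (Set.range (f ∘ word k)) := by
        rw [Submodule.map_span, ← Set.range_comp]
        rfl
    _ ≤ Submodule.span k (Set.range (normalWord f)) :=
        Submodule.span_mono <| Set.range_subset_iff.2 fun l =>
          ⟨ofList l, (map_word_eq_normalWord f hf l).symm⟩

theorem linearIndependent_normalWord
    (hker : ∀ z, f z = 0 → z ∈ TwoSidedIdeal.span (relations k α)) :
    LinearIndependent k (normalWord f) := by
  have hof : LinearIndependent k (MonoidAlgebra.of k (Monomial α)) :=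
    (MonoidAlgebra.basis (Monomial α) k).linearIndependent
  have hψ : (toMonoidAlgebra k).toLinearMap ∘ (word k ∘ Function.surjInv ofList_surjective) =
      MonoidAlgebra.of k (Monomial α) := by
    funext g
    simp [toMonoidAlgebra_word, Function.surjInv_eq]
  rw [← hψ] at hof
  exact hof.comp_of_ker_le f.toLinearMap fun z hz =>
    (TwoSidedIdeal.mem_ker (toMonoidAlgebra k)).1 (span_relations_le_ker k (hker z hz))

theorem image_normalWord_preimage_degree (hf : ∀ r ∈ relations k α, f r = 0) (d : α → ℕ) (m : ℕ) :
    normalWord f '' (degree d ⁻¹' {m}) =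
      {q | ∃ l : List α, (l.map d).sum = m ∧ q = (l.map fun i => f (FreeAlgebra.ι k i)).prod} := by
  ext q
  constructor
  · rintro ⟨g, hg, rfl⟩
    refine ⟨Function.surjInv ofList_surjective g, ?_, map_word f _⟩
    rwa [← degree_ofList, Function.surjInv_eq ofList_surjective]
  · rintro ⟨l, hl, rfl⟩
    exact ⟨ofList l, (degree_ofList d l).trans hl, by rw [← map_word, map_word_eq_normalWord f hf]⟩

end Presentation

section Counting

variable (d : α → ℕ)

theorem degree_preimage_zero (hd : ∀ i, 1 ≤ d i) : degree d ⁻¹' {0} = {1} := by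
  ext g
  induction g using WithOne.recOneCoe with
  | one => simp
  | coe w =>
    have := hd w.head
    simp only [Set.mem_preimage, degree_coe, Word.degree, Set.mem_singleton_iff,
      WithOne.coe_ne_one, iff_false]
    omega

theorem card_degree_preimage {m : ℕ} (hm : m ≠ 0) :
    Nat.card (degree d ⁻¹' {m}) =
      Nat.card {p : α × (α →₀ ℕ) // d p.1 + (p.2.sum fun j e => e * d j) = m} := by
  refine (Nat.card_eq_of_bijective (fun p => ⟨((⟨p.1.1, p.1.2⟩ : Word α) : Monomial α), p.2⟩)
    ⟨fun p q h => ?_, fun ⟨g, hg⟩ => ?_⟩).symm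
  · obtain ⟨h₁, h₂⟩ := Word.mk.inj (WithOne.coe_inj.1 (congrArg Subtype.val h))
    exact Subtype.ext (Prod.ext h₁ h₂)
  · induction g using WithOne.recOneCoe with
    | one => exact absurd hg.symm hm
    | coe w => exact ⟨⟨(w.head, w.tail), hg⟩, rfl⟩

end Counting

end GPerm

end

open GPerm Monomial

/-- The free connected GPerm algebra `GPerm⟨X⟩ = k⟨X⟩/(x_i x_j x_l - x_i x_l x_j)`
on generators `x_1, …, x_n` of positive degrees `d i`:
as a graded vector space it is `k ⊕ ⊕_{i=1}^n x_i·k[x_1,…,x_n]`.  Concretely,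
for any presentation `π : k⟨X⟩ → Q` with kernel the two-sided ideal of the
relations, and `W m` the span of the images of the words of total degree `m`,
the `W m` are independent and span `Q`, `dim W 0 = 1`, and for `m ≥ 1`
`dim W m = #{(i, f) : d i + Σ_j f j · d j = m}`, which is exactly the claim
that the Hilbert series is `1 + (Σ_i t^{d i}) / (Π_i (1 - t^{d i}))`. -/
theorem stmt10 {k : Type*} [Field k] {n : ℕ} (d : Fin n → ℕ) (hd : ∀ i, 1 ≤ d i)
    (Q : Type*) [Ring Q] [Algebra k Q] (π : FreeAlgebra k (Fin n) →ₐ[k] Q)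
    (hsurj : Function.Surjective π)
    (hker : ∀ z : FreeAlgebra k (Fin n), π z = 0 ↔ z ∈ TwoSidedIdeal.span
      {w | ∃ i j l : Fin n,
        w = FreeAlgebra.ι k i * FreeAlgebra.ι k j * FreeAlgebra.ι k l
          - FreeAlgebra.ι k i * FreeAlgebra.ι k l * FreeAlgebra.ι k j})
    (W : ℕ → Submodule k Q)
    (hW : ∀ m, W m = Submodule.span k
      {q | ∃ l : List (Fin n), (l.map d).sum = m ∧
        q = (l.map (fun i => π (FreeAlgebra.ι k i))).prod}) :
    Module.finrank k (W 0) = 1 ∧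
    (∀ m, 1 ≤ m → Module.finrank k (W m)
      = Nat.card {p : Fin n × (Fin n →₀ ℕ) //
          d p.1 + (p.2.sum fun j e => e * d j) = m}) ∧
    iSup W = ⊤ ∧ iSupIndep W := by
  have hrel : ∀ r ∈ relations k (Fin n), π r = 0 :=
    fun r hr => (hker r).2 (TwoSidedIdeal.subset_span hr)
  have hlin : LinearIndependent k (normalWord π) :=
    linearIndependent_normalWord π fun z => (hker z).1
  obtain rfl : W = fun m => Submodule.span k (normalWord π '' (degree d ⁻¹' {m})) :=
    funext fun m => (hW m).trans (by rw [image_normalWord_preimage_degree π hrel])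
  refine ⟨?_, fun m hm => ?_, ?_, hlin.iSupIndep_span_image_preimage_singleton _⟩
  · rw [hlin.finrank_span_image, degree_preimage_zero d hd, Nat.card_unique]
  · rw [hlin.finrank_span_image, card_degree_preimage d (by omega)]
  · rw [iSup_span_image_preimage_singleton, span_range_normalWord π hrel hsurj]
end

section
/- Let A be a pseudo-graded-commutative (PGC) algebra of odd type (A_{i,e} = 0 for all i ≥ 1) in which the left annihilator of A_{≥2} is zero. Then for homogeneous x, y ∈ A of positive degree, xy = (−1)^{deg x · deg y} yx; in particular x² = 0 whenever deg x is odd and char k ≠ 2, so A is a graded (super)commutative algebra with respect to this sign rule. -/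
/-- A PGC (pseudo-graded-commutative) algebra of odd type whose left annihilator
of `A_{≥2}` is zero is graded (super)commutative: for homogeneous `x, y` of
positive degrees `j, l` one has `xy = (-1)^{jl} yx`; in particular, if
`char k ≠ 2`, then `x² = 0` for homogeneous `x` of odd degree. -/
theorem stmt12 {k A : Type*} [Field k] [Ring A] [Algebra k A]
    (𝒜 : ℕ → Submodule k A) [GradedAlgebra 𝒜]
    (hpgc : ∀ i, 2 ≤ i → ∀ x ∈ 𝒜 i, ∀ (j l : ℕ), ∀ y ∈ 𝒜 j, ∀ z ∈ 𝒜 l,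
      x * (y * z) = ((-1 : ℤ) ^ (j * l)) • (x * (z * y)))
    (hann : ∀ w : A, (∀ i, 2 ≤ i → ∀ x ∈ 𝒜 i, x * w = 0) → w = 0) :
    (∀ (j l : ℕ), 1 ≤ j → 1 ≤ l → ∀ x ∈ 𝒜 j, ∀ y ∈ 𝒜 l,
      x * y = ((-1 : ℤ) ^ (j * l)) • (y * x)) ∧
    ((2 : k) ≠ 0 → ∀ j : ℕ, Odd j → ∀ x ∈ 𝒜 j, x * x = 0) := by
  have main : ∀ (j l : ℕ), 1 ≤ j → 1 ≤ l → ∀ x ∈ 𝒜 j, ∀ y ∈ 𝒜 l,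
      x * y = ((-1 : ℤ) ^ (j * l)) • (y * x) := by
    intro j l hj hl x hx y hy
    have h0 : x * y - ((-1 : ℤ) ^ (j * l)) • (y * x) = 0 := by
      apply hann
      intro i hi a ha
      have h := hpgc i hi a ha j l x hx y hy
      rw [mul_sub, h, mul_smul_comm, sub_self]
    exact sub_eq_zero.mp h0
  refine ⟨main, fun h2 j hj x hx => ?_⟩
  have hj1 : 1 ≤ j := hj.pos
  have h := main j j hj1 hj1 x hx x hx
  rw [Odd.neg_one_pow (hj.mul hj)] at h
  have hxx : x * x + x * x = 0 := by
    nth_rewrite 1 [h]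
    simp
  have h2smul : (2 : k) • (x * x) = 0 := by rw [two_smul]; exact hxx
  rcases smul_eq_zero.mp h2smul with h' | h'
  · exact absurd h' h2
  · exact h'
end

section
/- Let A = k⟨x, y⟩/(xy, y²) with deg x = deg y = 1. Then: (1) A is a connected GPerm algebra; (2) the Hilbert series of A is 1 + 2t/(1−t); (3) the set of elements annihilated on the left by A_{≥n} for some n (left torsion) equals the span of {y x^i : i ≥ 0}, which is infinite dimensional; (4) the center of A is k. -/
noncomputable section

/-- The relations `xy = 0`, `y² = 0` in the free algebra `k⟨x,y⟩`
(generator `0` is `x`, generator `1` is `y`). -/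
inductive Rel14 (k : Type) [Field k] :
    FreeAlgebra k (Fin 2) → FreeAlgebra k (Fin 2) → Prop
  | xy : Rel14 k (FreeAlgebra.ι k 0 * FreeAlgebra.ι k 1) 0
  | yy : Rel14 k (FreeAlgebra.ι k 1 * FreeAlgebra.ι k 1) 0

/-- `A = k⟨x,y⟩/(xy, y²)`. -/
abbrev A14 (k : Type) [Field k] := RingQuot (Rel14 k)

/-- The images of the generators `x, y` in `A`. -/
def G14 (k : Type) [Field k] : Fin 2 → A14 k :=
  fun i => RingQuot.mkAlgHom k (Rel14 k) (FreeAlgebra.ι k i)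

/-- The degree-`m` component of `A` (span of the images of words of length `m`,
as `deg x = deg y = 1`). -/
def W14 (k : Type) [Field k] (m : ℕ) : Submodule k (A14 k) :=
  Submodule.span k {q | ∃ l : List (Fin 2), l.length = m ∧ q = (l.map (G14 k)).prod}

/-! `A` is isomorphic to the trivial square-zero extension `k[x] ⊕ M`, where `M = y k[x]` is the
`k[x]`-bimodule on which `x` acts by `0` from the left (as `xy = 0`) and by multiplication from the
right, and `M · M = 0` (as `y² = 0`). In this model an element of positive degree has a first
component vanishing at `0`, so it annihilates `M` from the left and only sees the commutative first
components of what it multiplies: this gives the GPerm identity and shows that `M = span {y xⁱ}` is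
the left torsion. `A_m` is spanned by `xᵐ` and `y xᵐ⁻¹`, and a central element has no `M`-part
(it commutes with `x`) and a constant `k[x]`-part (it commutes with `y`). -/

open Polynomial TrivSqZeroExt MulOpposite

namespace TrivSqZeroExt

variable {R M : Type*}

theorem mul_inr [Semiring R] [AddCommMonoid M] [Module R M] [Module Rᵐᵒᵖ M]
    (x : TrivSqZeroExt R M) (m : M) : x * inr m = inr (x.fst • m) :=
  ext (mul_zero _) (by simp)

theorem mul_mul_comm_of_fst_smul_eq_zero [CommMonoid R] [AddMonoid M] [DistribMulAction R M]
    [DistribMulAction Rᵐᵒᵖ M] {x : TrivSqZeroExt R M} (hx : ∀ m : M, x.fst • m = 0)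
    (y z : TrivSqZeroExt R M) : x * (y * z) = x * (z * y) :=
  ext (by simp [mul_comm]) (by simp [hx, mul_comm])

end TrivSqZeroExt

/-- The bimodule `M = y k[x]` on the underlying type `k[x]`: `q` stands for `y q(x)`. -/
def YMod (k : Type) [Field k] : Type := k[X]

namespace YMod

variable {k : Type} [Field k]

instance : AddCommGroup (YMod k) := inferInstanceAs (AddCommGroup k[X])
instance : Module k (YMod k) := inferInstanceAs (Module k k[X])
instance : Module k[X] (YMod k) := Module.compHom (YMod k) (constantCoeff : k[X] →+* k)
instance : Module k[X]ᵐᵒᵖ (YMod k) := inferInstanceAs (Module k[X]ᵐᵒᵖ k[X])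

def of : k[X] ≃ₗ[k] YMod k := LinearEquiv.refl k k[X]

theorem smul_def (p : k[X]) (m : YMod k) : p • m = p.coeff 0 • m := rfl

theorem op_smul_of (p q : k[X]) : op p • of q = of (q * p) := rfl

instance : SMulCommClass k[X] k[X]ᵐᵒᵖ (YMod k) where
  smul_comm p q m := by
    obtain ⟨m, rfl⟩ := of.surjective m
    obtain ⟨q, rfl⟩ := op_surjective q
    simp only [smul_def, op_smul_of, ← map_smul, smul_mul_assoc]

instance : IsScalarTower k k[X] (YMod k) where
  smul_assoc c p m := by
    rw [smul_def, smul_def, coeff_smul, smul_eq_mul, mul_smul]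

instance : IsScalarTower k k[X]ᵐᵒᵖ (YMod k) where
  smul_assoc c p m := by
    obtain ⟨m, rfl⟩ := of.surjective m
    obtain ⟨p, rfl⟩ := op_surjective p
    rw [← op_smul, op_smul_of, op_smul_of, ← map_smul, mul_smul_comm]

end YMod

namespace A14

variable {k : Type} [Field k]

theorem x_mul_y : G14 k 0 * G14 k 1 = 0 := by
  simpa only [G14, map_mul, map_zero] using RingQuot.mkAlgHom_rel k Rel14.xy

theorem y_mul_y : G14 k 1 * G14 k 1 = 0 := by
  simpa only [G14, map_mul, map_zero] using RingQuot.mkAlgHom_rel k Rel14.yy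

theorem aeval_x_mul_y (p : k[X]) : aeval (G14 k 0) p * G14 k 1 = p.coeff 0 • G14 k 1 := by
  induction p using Polynomial.induction_on' with
  | add p q hp hq => rw [map_add, add_mul, hp, hq, coeff_add, add_smul]
  | monomial n c =>
    cases n with
    | zero => simp [Algebra.smul_def]
    | succ n => simp [Algebra.smul_def, mul_assoc, pow_succ, x_mul_y]

variable (k)

def toModel : A14 k →ₐ[k] TrivSqZeroExt k[X] (YMod k) :=
  RingQuot.liftAlgHom k ⟨FreeAlgebra.lift k ![inl X, inr (YMod.of 1)], by
    rintro _ _ ⟨⟩ <;> simp [inl_mul_inr, YMod.smul_def]⟩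

def yMul : YMod k →ₗ[k] A14 k :=
  LinearMap.mulLeft k (G14 k 1) ∘ₗ (aeval (G14 k 0)).toLinearMap ∘ₗ YMod.of.symm.toLinearMap

def ofModel : TrivSqZeroExt k[X] (YMod k) →ₐ[k] A14 k :=
  TrivSqZeroExt.lift (aeval (G14 k 0)) (yMul k)
    (fun m n => by simp [yMul, mul_assoc, ← mul_assoc _ (G14 k 1), aeval_x_mul_y, y_mul_y])
    (fun p m => by simp [yMul, YMod.smul_def, ← mul_assoc, aeval_x_mul_y])
    (fun p m => by
      obtain ⟨m, rfl⟩ := YMod.of.surjective m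
      simp [yMul, YMod.op_smul_of, mul_assoc])

@[simp] theorem toModel_x : toModel k (G14 k 0) = inl X := by
  simp [toModel, G14, RingQuot.liftAlgHom_mkAlgHom_apply]

@[simp] theorem toModel_y : toModel k (G14 k 1) = inr (YMod.of 1) := by
  simp [toModel, G14, RingQuot.liftAlgHom_mkAlgHom_apply]

theorem toModel_aeval_x (p : k[X]) : toModel k (aeval (G14 k 0) p) = inl p := by
  rw [← aeval_algHom_apply, toModel_x, ← inlAlgHom_apply k, aeval_algHom_apply,
    aeval_X_left_apply, inlAlgHom_apply]

def modelEquiv : A14 k ≃ₐ[k] TrivSqZeroExt k[X] (YMod k) :=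
  AlgEquiv.ofAlgHom (toModel k) (ofModel k)
    (AlgHom.ext fun z => by
      induction z using TrivSqZeroExt.ind with
      | _ p m =>
        obtain ⟨m, rfl⟩ := YMod.of.surjective m
        simp [ofModel, yMul, toModel_aeval_x, inr_mul_inl, YMod.op_smul_of])
    (by
      refine RingQuot.ringQuot_ext' _ _ _ (FreeAlgebra.hom_ext (funext fun i => ?_))
      fin_cases i
      · change ofModel k (toModel k (G14 k 0)) = G14 k 0
        simp [ofModel]
      · change ofModel k (toModel k (G14 k 1)) = G14 k 1
        simp [ofModel, yMul])

@[simp] theorem modelEquiv_x : modelEquiv k (G14 k 0) = inl X := toModel_x k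

@[simp] theorem modelEquiv_y : modelEquiv k (G14 k 1) = inr (YMod.of 1) := toModel_y k

theorem modelEquiv_symm_inr (q : k[X]) :
    (modelEquiv k).symm (inr (YMod.of q)) = G14 k 1 * aeval (G14 k 0) q := by
  simp [modelEquiv, ofModel, yMul]

theorem modelEquiv_x_pow (n : ℕ) : modelEquiv k (G14 k 0 ^ n) = inl (X ^ n) := by
  rw [map_pow, modelEquiv_x, inl_pow]

theorem modelEquiv_y_mul_x_pow (n : ℕ) :
    modelEquiv k (G14 k 1 * G14 k 0 ^ n) = inr (YMod.of (X ^ n)) := by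
  rw [map_mul, modelEquiv_x_pow, modelEquiv_y, inr_mul_inl, YMod.op_smul_of, one_mul]

theorem list_prod_map_G14 (l : List (Fin 2)) :
    (l.map (G14 k)).prod = 0 ∨ (l.map (G14 k)).prod = G14 k 0 ^ l.length ∨
      (l.map (G14 k)).prod = G14 k 1 * G14 k 0 ^ (l.length - 1) := by
  induction l with
  | nil => simp
  | cons i t ih =>
    simp only [List.map_cons, List.prod_cons, List.length_cons, Nat.add_sub_cancel]
    fin_cases i <;> rcases ih with h | h | h <;> simp only [h, mul_zero, true_or] <;>
      simp [pow_succ', ← mul_assoc, x_mul_y, y_mul_y]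

variable {k}

theorem W14_zero : W14 k 0 = Submodule.span k {1} := by
  simp [W14]

theorem W14_succ (n : ℕ) :
    W14 k (n + 1) = Submodule.span k {G14 k 0 ^ (n + 1), G14 k 1 * G14 k 0 ^ n} := by
  refine le_antisymm (Submodule.span_le.mpr ?_) (Submodule.span_le.mpr ?_)
  · rintro _ ⟨l, hl, rfl⟩
    rcases list_prod_map_G14 k l with h | h | h <;> simp only [h, hl, SetLike.mem_coe]
    · exact Submodule.zero_mem _
    · exact Submodule.subset_span (by simp)
    · exact Submodule.subset_span (by simp)
  · refine Set.insert_subset_iff.mpr ⟨Submodule.subset_span ?_, Set.singleton_subset_iff.mpr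
      (Submodule.subset_span ?_)⟩
    · exact ⟨List.replicate (n + 1) 0, by simp, by simp [List.map_replicate]⟩
    · exact ⟨1 :: List.replicate n 0, by simp, by simp [List.map_replicate]⟩

theorem fst_modelEquiv_smul_eq_zero {n : ℕ} {a : A14 k} (ha : a ∈ W14 k (n + 1))
    (m : YMod k) : (modelEquiv k a).fst • m = 0 := by
  suffices (modelEquiv k a).fst.coeff 0 = 0 by rw [YMod.smul_def, this, zero_smul]
  let c : A14 k →ₗ[k] k :=
    lcoeff k 0 ∘ₗ (fstHom k k[X] (YMod k)).toLinearMap ∘ₗ (modelEquiv k).toLinearMap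
  have : W14 k (n + 1) ≤ LinearMap.ker c := by
    rw [W14_succ, Submodule.span_le, Set.insert_subset_iff, Set.singleton_subset_iff]
    simp [c, modelEquiv_x_pow, modelEquiv_y_mul_x_pow]
  exact this ha

theorem linearIndependent_x_pow_y_mul_x_pow (n : ℕ) :
    LinearIndependent k ![G14 k 0 ^ (n + 1), G14 k 1 * G14 k 0 ^ n] := by
  refine LinearIndependent.pair_iff.mpr fun s t h => ?_
  have h' := congrArg (modelEquiv k) h
  simp only [map_add, map_smul, modelEquiv_x_pow, modelEquiv_y_mul_x_pow, map_zero] at h'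
  exact ⟨by simpa using congrArg fst h', by simpa using congrArg snd h'⟩

theorem mem_span_y_mul_x_pow_iff (w : A14 k) :
    w ∈ Submodule.span k (Set.range fun i : ℕ => G14 k 1 * G14 k 0 ^ i) ↔
      (modelEquiv k w).fst = 0 := by
  constructor
  · intro hw
    let f : A14 k →ₗ[k] k[X] :=
      (fstHom k k[X] (YMod k)).toLinearMap ∘ₗ (modelEquiv k).toLinearMap
    have : Submodule.span k (Set.range fun i : ℕ => G14 k 1 * G14 k 0 ^ i) ≤ LinearMap.ker f := by
      rw [Submodule.span_le]
      rintro _ ⟨i, rfl⟩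
      simp [f, modelEquiv_y_mul_x_pow]
    exact this hw
  · intro hw
    obtain ⟨q, hq⟩ := YMod.of.surjective (modelEquiv k w).snd
    have : modelEquiv k w = inr (YMod.of q) := TrivSqZeroExt.ext hw hq.symm
    rw [← (modelEquiv k).symm_apply_apply w, this, modelEquiv_symm_inr, aeval_eq_sum_range,
      Finset.mul_sum]
    refine Submodule.sum_mem _ fun i _ => ?_
    rw [mul_smul_comm]
    exact Submodule.smul_mem _ _ (Submodule.subset_span ⟨i, rfl⟩)

theorem mul_mul_comm_of_mem_W14 {m : ℕ} (hm : 1 ≤ m) {a : A14 k} (ha : a ∈ W14 k m)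
    (b c : A14 k) : a * (b * c) = a * (c * b) := by
  obtain ⟨n, rfl⟩ := Nat.exists_eq_add_of_le' hm
  apply (modelEquiv k).injective
  simp only [map_mul]
  exact mul_mul_comm_of_fst_smul_eq_zero (fst_modelEquiv_smul_eq_zero ha) _ _

variable (k)

theorem finrank_W14_zero : Module.finrank k (W14 k 0) = 1 := by
  have : Nontrivial (A14 k) := (modelEquiv k).toEquiv.nontrivial
  rw [W14_zero, finrank_span_singleton one_ne_zero]

theorem finrank_W14_succ (n : ℕ) : Module.finrank k (W14 k (n + 1)) = 2 := by
  rw [W14_succ, ← Matrix.range_cons_cons_empty _ _ ![],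
    finrank_span_eq_card (linearIndependent_x_pow_y_mul_x_pow n), Fintype.card_fin]

theorem linearIndependent_y_mul_x_pow :
    LinearIndependent k fun i : ℕ => G14 k 1 * G14 k 0 ^ i := by
  let f : A14 k →ₗ[k] k[X] := YMod.of.symm.toLinearMap ∘ₗ
    ((sndHom k[X] (YMod k)).restrictScalars k) ∘ₗ (modelEquiv k).toLinearMap
  refine LinearIndependent.of_comp f ?_
  convert (basisMonomials k).linearIndependent using 1
  funext i
  simp [f, modelEquiv_y_mul_x_pow, X_pow_eq_monomial]

theorem center_eq_bot : Subalgebra.center k (A14 k) = ⊥ := by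
  refine le_antisymm (fun z hz => ?_) bot_le
  rw [Subalgebra.mem_center_iff] at hz
  obtain ⟨q, hq⟩ := YMod.of.surjective (modelEquiv k z).snd
  have hx := congrArg (fun w => (modelEquiv k w).snd) (hz (G14 k 0))
  have hy := congrArg (fun w => (modelEquiv k w).snd) (hz (G14 k 1))
  simp only [map_mul, modelEquiv_x, modelEquiv_y, fst_inl, snd_inl, fst_inr, snd_inr, snd_mul,
    ← hq, YMod.smul_def, YMod.op_smul_of, coeff_X_zero, zero_smul, smul_zero, op_zero, add_zero,
    zero_add, one_mul] at hx hy
  have hq0 : q = 0 := by simpa [X_ne_zero] using hx.symm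
  have hp : (modelEquiv k z).fst = C ((modelEquiv k z).fst.coeff 0) := by
    simpa [← map_smul, smul_eq_C_mul] using hy
  refine Algebra.mem_bot.mpr ⟨(modelEquiv k z).fst.coeff 0, (modelEquiv k).injective ?_⟩
  rw [AlgEquiv.commutes, algebraMap_eq_inl', algebraMap_eq, ← hp]
  exact TrivSqZeroExt.ext rfl (by simp [← hq, hq0])

theorem leftTorsion_eq_span_y_mul_x_pow :
    {w : A14 k | ∃ N : ℕ, ∀ m, N ≤ m → ∀ a ∈ W14 k m, a * w = 0} =
      Submodule.span k (Set.range fun i : ℕ => G14 k 1 * G14 k 0 ^ i) := by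
  ext w
  rw [Set.mem_ofPred_eq, SetLike.mem_coe, mem_span_y_mul_x_pow_iff]
  constructor
  · rintro ⟨N, hN⟩
    have hx : G14 k 0 ^ (N + 1) ∈ W14 k (N + 1) := by
      rw [W14_succ]
      exact Submodule.subset_span (by simp)
    simpa [modelEquiv_x_pow, X_ne_zero] using
      congrArg (fun a => (modelEquiv k a).fst) (hN (N + 1) N.le_succ _ hx)
  · intro hw
    refine ⟨1, fun m hm a ha => (modelEquiv k).injective ?_⟩
    obtain ⟨n, rfl⟩ := Nat.exists_eq_add_of_le' hm
    have hw' : modelEquiv k w = inr (modelEquiv k w).snd := TrivSqZeroExt.ext hw rfl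
    rw [map_mul, map_zero, hw', mul_inr, fst_modelEquiv_smul_eq_zero ha, inr_zero]

theorem not_finiteDimensional_span_y_mul_x_pow :
    ¬ FiniteDimensional k (Submodule.span k (Set.range fun i : ℕ => G14 k 1 * G14 k 0 ^ i)) :=
  fun _ => Module.Finite.not_linearIndependent_of_infinite _
    (linearIndependent_span (linearIndependent_y_mul_x_pow k))

end A14

/-- For `A = k⟨x,y⟩/(xy, y²)` with `deg x = deg y = 1`:
(1) `A` is a (connected) GPerm algebra;
(2) its Hilbert series is `1 + 2t/(1-t)`, i.e. `dim A_0 = 1` and `dim A_m = 2`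
    for `m ≥ 1`;
(3) the set of left torsion elements (killed on the left by `A_{≥N}` for some
    `N`) is the span of `{y xⁱ : i ≥ 0}`, which is infinite dimensional;
(4) the center of `A` is `k`. -/
theorem stmt14 (k : Type) [Field k] :
    (∀ m, 1 ≤ m → ∀ a ∈ W14 k m, ∀ b c : A14 k, a * (b * c) = a * (c * b)) ∧
    (Module.finrank k (W14 k 0) = 1 ∧ ∀ m, 1 ≤ m → Module.finrank k (W14 k m) = 2) ∧
    ({w : A14 k | ∃ N : ℕ, ∀ m, N ≤ m → ∀ a ∈ W14 k m, a * w = 0}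
      = (Submodule.span k (Set.range fun i : ℕ => G14 k 1 * (G14 k 0) ^ i) :
          Submodule k (A14 k))) ∧
    (¬ FiniteDimensional k
      (Submodule.span k (Set.range fun i : ℕ => G14 k 1 * (G14 k 0) ^ i))) ∧
    Subalgebra.center k (A14 k) = ⊥ := by
  refine ⟨fun m hm a ha b c => A14.mul_mul_comm_of_mem_W14 hm ha b c,
    ⟨A14.finrank_W14_zero k, fun m hm => ?_⟩, A14.leftTorsion_eq_span_y_mul_x_pow k,
    A14.not_finiteDimensional_span_y_mul_x_pow k, A14.center_eq_bot k⟩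
  obtain ⟨n, rfl⟩ := Nat.exists_eq_add_of_le' hm
  exact A14.finrank_W14_succ k n

end
end

section
/- In the graded algebra B = ⊕_{i≥0} B_i with B_0 = k and B_i = span{x_{i,1},…,x_{i,i+1}} for i ≥ 1, and multiplication x_{i,s}·x_{j,t} = x_{i+j,t} if s = 1 and 0 if s ≠ 1 (extended unitally), the two-sided ideal generated by x_{1,2} is nilpotent (indeed squares to zero); hence B is not a prime ring (and not semiprime). -/
/-- Let `B` be the graded algebra with basis `{1} ∪ {x_{i,s} : i ≥ 1, 1 ≤ s ≤ i+1}`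
and multiplication `x_{i,s}·x_{j,t} = x_{i+j,t}` if `s = 1` and `0` otherwise.
The two-sided ideal generated by `x_{1,2}` squares to zero and is nonzero;
hence `B` is neither prime nor semiprime. -/
theorem stmt15 {k B : Type*} [Field k] [Ring B] [Algebra k B]
    (x : ℕ → ℕ → B)
    (hmul : ∀ i j s t : ℕ, 1 ≤ i → 1 ≤ j → 1 ≤ s → s ≤ i + 1 → 1 ≤ t → t ≤ j + 1 →
      x i s * x j t = if s = 1 then x (i + j) t else 0)
    (hspan : Submodule.span k
      ({1} ∪ {b : B | ∃ i s : ℕ, 1 ≤ i ∧ 1 ≤ s ∧ s ≤ i + 1 ∧ b = x i s}) = ⊤)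
    (hx : x 1 2 ≠ 0) :
    (∀ a ∈ TwoSidedIdeal.span {x 1 2}, ∀ b ∈ TwoSidedIdeal.span {x 1 2}, a * b = 0) ∧
    (TwoSidedIdeal.span {x 1 2} ≠ ⊥) ∧
    ¬ (∀ I : TwoSidedIdeal B, (∀ a ∈ I, ∀ b ∈ I, a * b = 0) → ∀ a ∈ I, a = 0) ∧
    ¬ (∀ I J : TwoSidedIdeal B,
        (∀ a ∈ I, ∀ b ∈ J, a * b = 0) → (∀ a ∈ I, a = 0) ∨ (∀ b ∈ J, b = 0)) := by
  -- x12 kills every basis element on the left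
  have hkill : ∀ i s : ℕ, 1 ≤ i → 1 ≤ s → s ≤ i + 1 → x 1 2 * x i s = 0 := by
    intro i s hi hs hsi
    rw [hmul 1 i 2 s le_rfl hi (by norm_num) (by norm_num) hs hsi]
    simp
  -- key: x12 * c * x12 = 0 for all c
  have key : ∀ c : B, x 1 2 * c * x 1 2 = 0 := by
    intro c
    have hc : c ∈ Submodule.span k
        ({1} ∪ {b : B | ∃ i s : ℕ, 1 ≤ i ∧ 1 ≤ s ∧ s ≤ i + 1 ∧ b = x i s}) := by
      rw [hspan]; trivial
    induction hc using Submodule.span_induction with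
    | mem b hb =>
      rcases hb with hb | ⟨i, s, hi, hs, hsi, rfl⟩
      · rcases hb with rfl
        rw [mul_one, hmul 1 1 2 2 le_rfl le_rfl (by norm_num) (by norm_num) (by norm_num)
          (by norm_num)]
        simp
      · rw [hkill i s hi hs hsi, zero_mul]
    | zero => simp
    | add a b _ _ ha hb => rw [mul_add, add_mul, ha, hb, add_zero]
    | smul r a _ ha => rw [mul_smul_comm, smul_mul_assoc, ha, smul_zero]
  -- the left-annihilator style ideal L
  set L : TwoSidedIdeal B := TwoSidedIdeal.mk'
    {b : B | x 1 2 * b = 0 ∧ ∀ c : B, x 1 2 * c * b = 0}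
    ⟨by simp, by simp⟩
    (fun {a b} ha hb => ⟨by rw [mul_add, ha.1, hb.1, add_zero],
      fun c => by rw [mul_add, ha.2 c, hb.2 c, add_zero]⟩)
    (fun {a} ha => ⟨by rw [mul_neg, ha.1, neg_zero],
      fun c => by rw [mul_neg, ha.2 c, neg_zero]⟩)
    (fun {r b} hb => ⟨by rw [← mul_assoc]; exact hb.2 r,
      fun c => by rw [show x 1 2 * c * (r * b) = x 1 2 * (c * r) * b by simp only [mul_assoc]]; exact hb.2 _⟩)
    (fun {b r} hb => ⟨by rw [← mul_assoc, hb.1, zero_mul],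
      fun c => by rw [← mul_assoc, hb.2 c, zero_mul]⟩) with hL
  have hx12L : x 1 2 ∈ L := by
    rw [hL, TwoSidedIdeal.mem_mk']
    exact ⟨by
      rw [hmul 1 1 2 2 le_rfl le_rfl (by norm_num) (by norm_num) (by norm_num) (by norm_num)]
      simp, key⟩
  have hspanL : ∀ a ∈ TwoSidedIdeal.span {x 1 2}, a ∈ L := fun a ha =>
    TwoSidedIdeal.mem_span_iff.mp ha L (Set.singleton_subset_iff.mpr hx12L)
  -- the ideal R of left annihilators of L
  set RI : TwoSidedIdeal B := TwoSidedIdeal.mk'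
    {a : B | ∀ b ∈ L, a * b = 0}
    (fun b _ => by simp)
    (fun {a a'} ha ha' b hb => by rw [add_mul, ha b hb, ha' b hb, add_zero])
    (fun {a} ha b hb => by rw [neg_mul, ha b hb, neg_zero])
    (fun {r a} ha b hb => by rw [mul_assoc, ha b hb, mul_zero])
    (fun {a r} ha b hb => by rw [mul_assoc]; exact ha _ (L.mul_mem_left r b hb)) with hR
  have hx12R : x 1 2 ∈ RI := by
    rw [hR, TwoSidedIdeal.mem_mk']
    intro b hb
    rw [hL, TwoSidedIdeal.mem_mk'] at hb
    exact hb.1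
  have sq : ∀ a ∈ TwoSidedIdeal.span {x 1 2}, ∀ b ∈ TwoSidedIdeal.span {x 1 2}, a * b = 0 := by
    intro a ha b hb
    have haR : a ∈ RI :=
      TwoSidedIdeal.mem_span_iff.mp ha RI (Set.singleton_subset_iff.mpr hx12R)
    rw [hR, TwoSidedIdeal.mem_mk'] at haR
    exact haR b (hspanL b hb)
  have hmem : x 1 2 ∈ TwoSidedIdeal.span {x 1 2} := TwoSidedIdeal.subset_span rfl
  have hne : TwoSidedIdeal.span {x 1 2} ≠ ⊥ := by
    intro h
    rw [h] at hmem
    exact hx hmem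
  refine ⟨sq, hne, ?_, ?_⟩
  · intro h
    exact hx (h _ sq _ hmem)
  · intro h
    rcases h _ _ sq with h' | h' <;> exact hx (h' _ hmem)
end

section
/- Let n, m ≥ 1, 1 ≤ i ≤ m, and let φ ∈ S_m. Let φ'' ∈ S_{m+n−1} be the block permutation obtained from φ by replacing the i-th input with a block of size n (i.e., φ'' permutes the m blocks of sizes 1,…,1,n,1,…,1 according to φ, acting identically within the block). Then sgn(φ'') = (−1)^{(n−1)(φ(i)−i)} · sgn(φ). -/
/-!
Induction on the block size `n`. For `n = 1` the block permutation is `φ` itself. For a block of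
size `n + 1`, the last point `p = i + n` of the big block is sent to `q = φ i + n`; deleting `p` from
the source and `q` from the target leaves the block permutation with a block of size `n`. Deleting
a matched pair `p ↦ q` changes the sign by `(-1)^(p + q)`, and `p + q ≡ φ i - i (mod 2)`.
-/

/-- `IsBlockPerm m n i φ σ ψ` says that `ψ ∈ S_{m+n-1}` is the block permutation
`ϑ_{m;1,…,1,n,1,…,1}(φ, 1,…,1,σ,1,…,1)` obtained from `φ ∈ S_m` by replacing the
`i`-th input with a block of size `n` carrying the internal permutation
`σ ∈ S_n`:  positions are `0`-based; the `m` blocks have sizes `1,…,1,n,1,…,1`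
(size `n` at position `i`); block `t` starts at source position
`t + (n-1)·[i < t]` (resp. `t` for `t ≤ i`), is sent to the block slot `φ t`,
which starts at target position `φ t + (n-1)·[φ i < φ t]`, and within the big
block positions are permuted by `σ`. -/
def IsBlockPerm (m n : ℕ) (hn : 1 ≤ n) (i : Fin m) (φ : Equiv.Perm (Fin m))
    (σ : Equiv.Perm (Fin n)) (ψ : Equiv.Perm (Fin (m + n - 1))) : Prop :=
  (∀ t : Fin m, t ≠ i →
    (ψ ⟨(t : ℕ) + (if (i : ℕ) < (t : ℕ) then n - 1 else 0),
        by have := t.isLt; have := i.isLt; split <;> omega⟩ : ℕ)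
      = (φ t : ℕ) + (if (φ i : ℕ) < (φ t : ℕ) then n - 1 else 0)) ∧
  (∀ o : Fin n,
    (ψ ⟨(i : ℕ) + (o : ℕ), by have := o.isLt; have := i.isLt; omega⟩ : ℕ)
      = (φ i : ℕ) + (σ o : ℕ))

open Equiv Equiv.Perm

theorem Fin.val_succAbove_eq_ite {n : ℕ} (p : Fin (n + 1)) (j : Fin n) :
    (p.succAbove j : ℕ) = if (j : ℕ) < p then (j : ℕ) else j + 1 := by
  unfold Fin.succAbove
  split_ifs <;> simp_all [Fin.lt_def]

theorem neg_one_zpow_eq_of_even_sub {α : Type*} [Group α] [HasDistribNeg α] {a b : ℤ}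
    (h : Even (a - b)) : (-1 : α) ^ a = (-1) ^ b := by
  rw [← sub_add_cancel a b, zpow_add, h.neg_one_zpow, one_mul]

theorem Equiv.Perm.exists_succAbove_restriction {N : ℕ} (σ : Perm (Fin (N + 1)))
    {p q : Fin (N + 1)} (h : σ p = q) :
    ∃ τ : Perm (Fin N), (∀ x, σ (p.succAbove x) = q.succAbove (τ x)) ∧
      sign σ = (-1) ^ ((p : ℕ) + q) * sign τ := by
  -- conjugating by the cycles `(0 1 … q)` and `(0 1 … p)` moves the pair `p ↦ q` to `0 ↦ 0`
  set π := q.cycleRange * σ * p.cycleRange⁻¹ with hπ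
  obtain ⟨⟨r, τ⟩, hrτ⟩ := decomposeFin.symm.surjective π
  have hr : r = 0 := by
    rw [← decomposeFin_symm_apply_zero r τ, hrτ, hπ]
    simp [Perm.inv_def, Fin.cycleRange_symm_zero, h, Fin.cycleRange_self]
  subst hr
  refine ⟨τ, fun x => ?_, ?_⟩
  · have := congrArg (· x.succ) hrτ
    simp only [decomposeFin_symm_apply_succ, swap_self, refl_apply] at this
    rw [← Fin.cycleRange_symm_succ, ← Fin.cycleRange_symm_succ, this, hπ]
    simp [Perm.inv_def]
  · have hσ : σ = q.cycleRange⁻¹ * π * p.cycleRange := by rw [hπ]; group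
    rw [hσ, ← hrτ]
    simp only [map_mul, sign_inv, decomposeFin.symm_sign, if_true, one_mul, Fin.sign_cycleRange]
    rw [pow_add]
    ac_rfl

theorem IsBlockPerm.eq_of_one {m : ℕ} {i : Fin m} {φ : Perm (Fin m)} {ψ : Perm (Fin m)}
    (hψ : IsBlockPerm m 1 le_rfl i φ 1 ψ) : ψ = φ := by
  ext x
  by_cases hx : x = i
  · subst hx
    simpa using hψ.2 0
  · simpa using hψ.1 x hx

theorem IsBlockPerm.of_succAbove {m k : ℕ} {i : Fin m} {φ : Perm (Fin m)}
    {ψ : Perm (Fin (m + k + 1))} {τ : Perm (Fin (m + k))}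
    (hψ : IsBlockPerm m (k + 2) (by omega) i φ 1 ψ)
    (hτ : ∀ x, ψ ((⟨i + (k + 1), by omega⟩ : Fin (m + k + 1)).succAbove x)
      = (⟨φ i + (k + 1), by omega⟩ : Fin (m + k + 1)).succAbove (τ x)) :
    IsBlockPerm m (k + 1) (by omega) i φ 1 τ := by
  set p : Fin (m + k + 1) := ⟨i + (k + 1), by omega⟩
  have hp : (p : ℕ) = i + (k + 1) := rfl
  have hτval : ∀ x, (ψ (p.succAbove x) : ℕ)
      = if (τ x : ℕ) < φ i + (k + 1) then (τ x : ℕ) else τ x + 1 := fun x => by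
    rw [hτ, Fin.val_succAbove_eq_ite]
  constructor
  · intro t ht
    have hφ : (φ t : ℕ) ≠ φ i := Fin.val_injective.ne (φ.injective.ne ht)
    have h := hτval ⟨t + if (i : ℕ) < t then k + 1 - 1 else 0, by split_ifs <;> omega⟩
    have hsrc : p.succAbove ⟨t + if (i : ℕ) < t then k + 1 - 1 else 0, by split_ifs <;> omega⟩
        = ⟨t + if (i : ℕ) < t then k + 2 - 1 else 0, by split_ifs <;> omega⟩ := by
      ext; simp only [Fin.val_succAbove_eq_ite, hp]; split_ifs <;> omega
    rw [hsrc, hψ.1 t ht] at h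
    generalize (τ _ : ℕ) = y at h ⊢
    split_ifs at h ⊢ <;> omega
  · intro o
    have h := hτval ⟨i + o, by omega⟩
    have hsrc : p.succAbove ⟨i + o, by omega⟩ = ⟨i + (o.castSucc : ℕ), by omega⟩ := by
      ext; simp only [Fin.val_succAbove_eq_ite, hp, Fin.val_castSucc]; split_ifs <;> omega
    rw [hsrc, hψ.2 o.castSucc] at h
    simp only [Perm.one_apply, Fin.val_castSucc] at h ⊢
    generalize (τ _ : ℕ) = y at h ⊢
    split_ifs at h <;> omega

theorem IsBlockPerm.sign_eq {m : ℕ} {i : Fin m} {φ : Perm (Fin m)} :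
    ∀ {k : ℕ} {ψ : Perm (Fin (m + k))}, IsBlockPerm m (k + 1) (by omega) i φ 1 ψ →
      sign ψ = (-1 : ℤˣ) ^ ((k : ℤ) * ((φ i : ℕ) - (i : ℕ))) * sign φ
  | 0, ψ, hψ => by rw [IsBlockPerm.eq_of_one hψ]; simp
  | k + 1, ψ, hψ => by
    have hpq : ψ ⟨i + (k + 1), by omega⟩ = ⟨φ i + (k + 1), by omega⟩ :=
      Fin.ext (by simpa using hψ.2 (Fin.last (k + 1)))
    obtain ⟨τ, hτ, hsign⟩ := ψ.exists_succAbove_restriction hpq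
    rw [hsign, (hψ.of_succAbove hτ).sign_eq, ← mul_assoc, ← zpow_natCast, ← zpow_add]
    congr 1
    apply neg_one_zpow_eq_of_even_sub
    exact ⟨i + k + 1, by push_cast; ring⟩

/-- The sign of the block permutation `φ''` obtained from `φ ∈ S_m` by replacing
the `i`-th input with a block of size `n` (identity inside the block):
`sgn(φ'') = (-1)^{(n-1)(φ(i)-i)}·sgn(φ)`. -/
theorem stmt19 {m n : ℕ} (hn : 1 ≤ n) (i : Fin m) (φ : Equiv.Perm (Fin m))
    (ψ : Equiv.Perm (Fin (m + n - 1))) (hψ : IsBlockPerm m n hn i φ 1 ψ) :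
    Equiv.Perm.sign ψ
      = (-1 : ℤˣ) ^ (((n : ℤ) - 1) * (((φ i : ℕ) : ℤ) - ((i : ℕ) : ℤ)))
        * Equiv.Perm.sign φ := by
  obtain ⟨k, rfl⟩ : ∃ k, n = k + 1 := ⟨n - 1, by omega⟩
  rw [IsBlockPerm.sign_eq hψ]
  push_cast
  ring_nf
end
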